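/- Algorithmic soundness for Flux updates: (1) if the algorithmic update judgment Γ ⊩ₐ {τ} s {τ'} is derivable (for a ∈ {1,*}) then the declarative update judgment Γ ⊢ₐ {τ} s {τ'} is derivable; (2) if the algorithmic iteration judgment Γ ⊩ᵢₜₑᵣ {τ} s {τ'} is derivable then the declarative iteration judgment Γ ⊢ᵢₜₑᵣ {τ} s {τ'} is derivable. -/

import Mathlib

namespace RegXDU

/-- XML tree values: booleans, strings, labeled nodes with a forest of children. -/
inductive Tree : Type where
  | bool (b : Bool)
  | str  (w : String)
  | node (n : ℕ) (v : List Tree)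

/-- Forest values are finite sequences of tree values. -/
abbrev Forest := List Tree

/-- Regular expression types over a fixed signature of type variables. -/
inductive Ty : Type where
  | bool
  | str
  | elem (n : ℕ) (t : Ty)
  | eps                      -- the empty-sequence type ()
  | alt (t₁ t₂ : Ty)
  | seq (t₁ t₂ : Ty)
  | star (t : Ty)
  | tvar (X : ℕ)

/-- Atomic (tree/singular) types: bool, string, n[τ]. -/
def Ty.Atomic : Ty → Prop
  | .bool => True
  | .str => True
  | .elem _ _ => True
  | _ => False

/-- A type definition has no top-level type variables. -/
def NoTopVar : Ty → Prop
  | .tvar _ => False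
  | .alt a b => NoTopVar a ∧ NoTopVar b
  | .seq a b => NoTopVar a ∧ NoTopVar b
  | .star a => NoTopVar a
  | _ => True

/-- A well-formed type signature: every definition has no top-level type variables. -/
def WellFormedSig (E : ℕ → Ty) : Prop := ∀ X, NoTopVar (E X)

/-- Denotation of types as sets of forest values (least fixed point). -/
inductive Denot (E : ℕ → Ty) : Ty → Forest → Prop where
  | bool (b : Bool) : Denot E .bool [.bool b]
  | str  (w : String) : Denot E .str [.str w]
  | eps : Denot E .eps []
  | elem {n t v} : Denot E t v → Denot E (.elem n t) [.node n v]
  | tvar {X v} : Denot E (E X) v → Denot E (.tvar X) v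
  | altL {t₁ t₂ v} : Denot E t₁ v → Denot E (.alt t₁ t₂) v
  | altR {t₁ t₂ v} : Denot E t₂ v → Denot E (.alt t₁ t₂) v
  | seq {t₁ t₂ v₁ v₂} : Denot E t₁ v₁ → Denot E t₂ v₂ → Denot E (.seq t₁ t₂) (v₁ ++ v₂)
  | starNil {t} : Denot E (.star t) []
  | starCons {t v₁ v₂} : Denot E t v₁ → Denot E (.star t) v₂ → Denot E (.star t) (v₁ ++ v₂)

/-- Subtyping: inclusion of denotations. -/
def Subty (E : ℕ → Ty) (t₁ t₂ : Ty) : Prop := ∀ v, Denot E t₁ v → Denot E t₂ v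

/-- A word of atomic types, identified with the type formed by concatenating its atoms. -/
def wordTy : List Ty → Ty
  | [] => .eps
  | a :: w => .seq a (wordTy w)

/-- The language L(τ): words of atomic types. -/
inductive Lang (E : ℕ → Ty) : Ty → List Ty → Prop where
  | eps : Lang E .eps []
  | atom {α α'} : Ty.Atomic α → Ty.Atomic α' → Subty E α' α → Lang E α [α']
  | seq {t₁ t₂ ω₁ ω₂} : Lang E t₁ ω₁ → Lang E t₂ ω₂ → Lang E (.seq t₁ t₂) (ω₁ ++ ω₂)
  | altL {t₁ t₂ ω} : Lang E t₁ ω → Lang E (.alt t₁ t₂) ω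
  | altR {t₁ t₂ ω} : Lang E t₂ ω → Lang E (.alt t₁ t₂) ω
  | starNil {t} : Lang E (.star t) []
  | starCons {t ω₁ ω₂} : Lang E t ω₁ → Lang E (.star t) ω₂ → Lang E (.star t) (ω₁ ++ ω₂)
  | tvar {X ω} : Lang E (E X) ω → Lang E (.tvar X) ω

/-- The atom set A(τ): `AtomIn E τ α` means α ∈ A(τ). -/
inductive AtomIn (E : ℕ → Ty) : Ty → Ty → Prop where
  | atom {α α'} : Ty.Atomic α → Ty.Atomic α' → Subty E α' α → AtomIn E α α'
  | seqL {t₁ t₂ α} : AtomIn E t₁ α → AtomIn E (.seq t₁ t₂) α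
  | seqR {t₁ t₂ α} : AtomIn E t₂ α → AtomIn E (.seq t₁ t₂) α
  | altL {t₁ t₂ α} : AtomIn E t₁ α → AtomIn E (.alt t₁ t₂) α
  | altR {t₁ t₂ α} : AtomIn E t₂ α → AtomIn E (.alt t₁ t₂) α
  | star {t α} : AtomIn E t α → AtomIn E (.star t) α
  | tvar {X α} : AtomIn E (E X) α → AtomIn E (.tvar X) α

/-- Homomorphic extension of a relation R on atomic types (graph of a partial
    function from atoms to types): `HomExtR E R τ σ` means ĥ(τ) = σ. -/
inductive HomExtR (E : ℕ → Ty) (R : Ty → Ty → Prop) : Ty → Ty → Prop where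
  | atom {α σ} : Ty.Atomic α → R α σ → HomExtR E R α σ
  | eps : HomExtR E R .eps .eps
  | seq {t₁ t₂ σ₁ σ₂} : HomExtR E R t₁ σ₁ → HomExtR E R t₂ σ₂ →
      HomExtR E R (.seq t₁ t₂) (.seq σ₁ σ₂)
  | alt {t₁ t₂ σ₁ σ₂} : HomExtR E R t₁ σ₁ → HomExtR E R t₂ σ₂ →
      HomExtR E R (.alt t₁ t₂) (.alt σ₁ σ₂)
  | star {t σ} : HomExtR E R t σ → HomExtR E R (.star t) (.star σ)
  | tvar {X σ} : HomExtR E R (E X) σ → HomExtR E R (.tvar X) σ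

/-- Partial homomorphic extension of a partial function h on atomic types. -/
def HomExt (E : ℕ → Ty) (h : Ty → Option Ty) : Ty → Ty → Prop :=
  HomExtR E (fun α σ => h α = some σ)

/-- h is downward closed on atomic types. -/
def DownwardClosed (E : ℕ → Ty) (h : Ty → Option Ty) : Prop :=
  ∀ α α', Ty.Atomic α → Ty.Atomic α' → Subty E α' α → (h α).isSome → (h α').isSome

/-- h is downward monotonic on atomic types. -/
def DownwardMonotone (E : ℕ → Ty) (h : Ty → Option Ty) : Prop :=
  ∀ α α' σ, Ty.Atomic α → Ty.Atomic α' → Subty E α' α → h α = some σ →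
    ∃ σ', h α' = some σ' ∧ Subty E σ' σ

/-! ## the μXQ query language -/

/-- μXQ expressions. -/
inductive Expr : Type where
  | eps
  | seq (e₁ e₂ : Expr)
  | elem (n : ℕ) (e : Expr)
  | str (w : String)
  | bool (b : Bool)
  | fvar (x : ℕ)                     -- forest variable
  | tvar (x : ℕ)                     -- tree variable
  | letE (x : ℕ) (e₁ e₂ : Expr)
  | ifE (c e₁ e₂ : Expr)
  | child (x : ℕ)                    -- x̄/child
  | label (e : Expr) (n : ℕ)         -- e::n
  | forE (x : ℕ) (e₁ e₂ : Expr)      -- for x̄ ∈ e₁ return e₂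
  | app (F : ℕ) (args : List Expr)

/-- Typing environments: forest variables and tree variables. -/
structure Env : Type where
  fv : ℕ → Option Ty
  tv : ℕ → Option Ty

def Env.addF (Γ : Env) (x : ℕ) (τ : Ty) : Env :=
  ⟨fun y => if y = x then some τ else Γ.fv y, Γ.tv⟩

def Env.addT (Γ : Env) (x : ℕ) (τ : Ty) : Env :=
  ⟨Γ.fv, fun y => if y = x then some τ else Γ.tv y⟩

def OptSub (E : ℕ → Ty) : Option Ty → Option Ty → Prop
  | none, none => True
  | some τ', some τ => Subty E τ' τ
  | _, _ => False

/-- Γ' <: Γ : same domains, pointwise subtyping. -/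
def EnvSub (E : ℕ → Ty) (Γ' Γ : Env) : Prop :=
  (∀ x, OptSub E (Γ'.fv x) (Γ.fv x)) ∧ (∀ x, OptSub E (Γ'.tv x) (Γ.tv x))

/-- The label-filtering judgment τ::n ⇒ τ'. -/
inductive LabelFilter (E : ℕ → Ty) (n : ℕ) : Ty → Ty → Prop where
  | elemEq {t} : LabelFilter E n (.elem n t) (.elem n t)
  | atomNe {α} : Ty.Atomic α → (∀ t, α ≠ .elem n t) → LabelFilter E n α .eps
  | eps : LabelFilter E n .eps .eps
  | seq {t₁ t₂ t₁' t₂'} : LabelFilter E n t₁ t₁' → LabelFilter E n t₂ t₂' →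
      LabelFilter E n (.seq t₁ t₂) (.seq t₁' t₂')
  | alt {t₁ t₂ t₁' t₂'} : LabelFilter E n t₁ t₁' → LabelFilter E n t₂ t₂' →
      LabelFilter E n (.alt t₁ t₂) (.alt t₁' t₂')
  | star {t t'} : LabelFilter E n t t' → LabelFilter E n (.star t) (.star t')
  | tvar {X t} : LabelFilter E n (E X) t → LabelFilter E n (.tvar X) t

mutual
/-- Algorithmic typing judgment Γ ⊩ e : τ for μXQ (no subsumption). -/
inductive ATy (E : ℕ → Ty) (Δ : ℕ → Option (List Ty × Ty)) : Env → Expr → Ty → Prop where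
  | eps {Γ} : ATy E Δ Γ .eps .eps
  | str {Γ w} : ATy E Δ Γ (.str w) .str
  | bool {Γ b} : ATy E Δ Γ (.bool b) .bool
  | fvar {Γ x τ} : Γ.fv x = some τ → ATy E Δ Γ (.fvar x) τ
  | tvar {Γ x α} : Γ.tv x = some α → Ty.Atomic α → ATy E Δ Γ (.tvar x) α
  | seq {Γ e₁ e₂ τ₁ τ₂} : ATy E Δ Γ e₁ τ₁ → ATy E Δ Γ e₂ τ₂ →
      ATy E Δ Γ (.seq e₁ e₂) (.seq τ₁ τ₂)
  | elem {Γ n e τ} : ATy E Δ Γ e τ → ATy E Δ Γ (.elem n e) (.elem n τ)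
  | letE {Γ x e₁ e₂ τ₁ τ₂} : ATy E Δ Γ e₁ τ₁ → ATy E Δ (Γ.addF x τ₁) e₂ τ₂ →
      ATy E Δ Γ (.letE x e₁ e₂) τ₂
  | ifE {Γ c e₁ e₂ τ₁ τ₂} : ATy E Δ Γ c .bool → ATy E Δ Γ e₁ τ₁ → ATy E Δ Γ e₂ τ₂ →
      ATy E Δ Γ (.ifE c e₁ e₂) (.alt τ₁ τ₂)
  | child {Γ x n τ} : Γ.tv x = some (.elem n τ) → ATy E Δ Γ (.child x) τ
  | label {Γ e n τ τ'} : ATy E Δ Γ e τ → LabelFilter E n τ τ' → ATy E Δ Γ (.label e n) τ'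
  | forE {Γ x e₁ e₂ τ₁ τ₂} : ATy E Δ Γ e₁ τ₁ → AIter E Δ Γ x τ₁ e₂ τ₂ →
      ATy E Δ Γ (.forE x e₁ e₂) τ₂
  | app {Γ F args σs τ₀} : Δ F = some (σs, τ₀) → AArgs E Δ Γ args σs →
      ATy E Δ Γ (.app F args) τ₀

/-- Algorithmic argument typing: each eᵢ has some algorithmic type subtyping the declared one. -/
inductive AArgs (E : ℕ → Ty) (Δ : ℕ → Option (List Ty × Ty)) : Env → List Expr → List Ty → Prop where
  | nil {Γ} : AArgs E Δ Γ [] []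
  | cons {Γ e es τ' σ σs} : ATy E Δ Γ e τ' → Subty E τ' σ → AArgs E Δ Γ es σs →
      AArgs E Δ Γ (e :: es) (σ :: σs)

/-- Algorithmic iteration judgment Γ; x̄ in τ ⊩ e : τ'. -/
inductive AIter (E : ℕ → Ty) (Δ : ℕ → Option (List Ty × Ty)) : Env → ℕ → Ty → Expr → Ty → Prop where
  | eps {Γ x e} : AIter E Δ Γ x .eps e .eps
  | atom {Γ x α e τ} : Ty.Atomic α → ATy E Δ (Γ.addT x α) e τ → AIter E Δ Γ x α e τ
  | tvar {Γ x X e τ} : AIter E Δ Γ x (E X) e τ → AIter E Δ Γ x (.tvar X) e τ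
  | seq {Γ x t₁ t₂ e τ₁ τ₂} : AIter E Δ Γ x t₁ e τ₁ → AIter E Δ Γ x t₂ e τ₂ →
      AIter E Δ Γ x (.seq t₁ t₂) e (.seq τ₁ τ₂)
  | alt {Γ x t₁ t₂ e τ₁ τ₂} : AIter E Δ Γ x t₁ e τ₁ → AIter E Δ Γ x t₂ e τ₂ →
      AIter E Δ Γ x (.alt t₁ t₂) e (.alt τ₁ τ₂)
  | star {Γ x t e τ} : AIter E Δ Γ x t e τ → AIter E Δ Γ x (.star t) e (.star τ)
end

mutual
/-- Declarative typing judgment Γ ⊢ e : τ for μXQ (with subsumption). -/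
inductive DTy (E : ℕ → Ty) (Δ : ℕ → Option (List Ty × Ty)) : Env → Expr → Ty → Prop where
  | eps {Γ} : DTy E Δ Γ .eps .eps
  | str {Γ w} : DTy E Δ Γ (.str w) .str
  | bool {Γ b} : DTy E Δ Γ (.bool b) .bool
  | fvar {Γ x τ} : Γ.fv x = some τ → DTy E Δ Γ (.fvar x) τ
  | tvar {Γ x α} : Γ.tv x = some α → Ty.Atomic α → DTy E Δ Γ (.tvar x) α
  | seq {Γ e₁ e₂ τ₁ τ₂} : DTy E Δ Γ e₁ τ₁ → DTy E Δ Γ e₂ τ₂ →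
      DTy E Δ Γ (.seq e₁ e₂) (.seq τ₁ τ₂)
  | elem {Γ n e τ} : DTy E Δ Γ e τ → DTy E Δ Γ (.elem n e) (.elem n τ)
  | letE {Γ x e₁ e₂ τ₁ τ₂} : DTy E Δ Γ e₁ τ₁ → DTy E Δ (Γ.addF x τ₁) e₂ τ₂ →
      DTy E Δ Γ (.letE x e₁ e₂) τ₂
  | ifE {Γ c e₁ e₂ τ₁ τ₂} : DTy E Δ Γ c .bool → DTy E Δ Γ e₁ τ₁ → DTy E Δ Γ e₂ τ₂ →
      DTy E Δ Γ (.ifE c e₁ e₂) (.alt τ₁ τ₂)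
  | child {Γ x n τ} : Γ.tv x = some (.elem n τ) → DTy E Δ Γ (.child x) τ
  | label {Γ e n τ τ'} : DTy E Δ Γ e τ → LabelFilter E n τ τ' → DTy E Δ Γ (.label e n) τ'
  | forE {Γ x e₁ e₂ τ₁ τ₂} : DTy E Δ Γ e₁ τ₁ → DIter E Δ Γ x τ₁ e₂ τ₂ →
      DTy E Δ Γ (.forE x e₁ e₂) τ₂
  | app {Γ F args τs τ₀} : Δ F = some (τs, τ₀) → DArgs E Δ Γ args τs →
      DTy E Δ Γ (.app F args) τ₀
  | sub {Γ e τ τ'} : DTy E Δ Γ e τ → Subty E τ τ' → DTy E Δ Γ e τ'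

/-- Declarative argument typing: each eᵢ has the declared type (possibly by subsumption). -/
inductive DArgs (E : ℕ → Ty) (Δ : ℕ → Option (List Ty × Ty)) : Env → List Expr → List Ty → Prop where
  | nil {Γ} : DArgs E Δ Γ [] []
  | cons {Γ e es τ τs} : DTy E Δ Γ e τ → DArgs E Δ Γ es τs →
      DArgs E Δ Γ (e :: es) (τ :: τs)

/-- Declarative iteration judgment Γ; x̄ in τ → e : τ'. -/
inductive DIter (E : ℕ → Ty) (Δ : ℕ → Option (List Ty × Ty)) : Env → ℕ → Ty → Expr → Ty → Prop where
  | eps {Γ x e} : DIter E Δ Γ x .eps e .eps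
  | atom {Γ x α e τ} : Ty.Atomic α → DTy E Δ (Γ.addT x α) e τ → DIter E Δ Γ x α e τ
  | tvar {Γ x X e τ} : DIter E Δ Γ x (E X) e τ → DIter E Δ Γ x (.tvar X) e τ
  | seq {Γ x t₁ t₂ e τ₁ τ₂} : DIter E Δ Γ x t₁ e τ₁ → DIter E Δ Γ x t₂ e τ₂ →
      DIter E Δ Γ x (.seq t₁ t₂) e (.seq τ₁ τ₂)
  | alt {Γ x t₁ t₂ e τ₁ τ₂} : DIter E Δ Γ x t₁ e τ₁ → DIter E Δ Γ x t₂ e τ₂ →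
      DIter E Δ Γ x (.alt t₁ t₂) e (.alt τ₁ τ₂)
  | star {Γ x t e τ} : DIter E Δ Γ x t e τ → DIter E Δ Γ x (.star t) e (.star τ)
end

/-! ## the Flux update language -/

/-- Tests. -/
inductive Test : Type where
  | lab (n : ℕ)
  | wild
  | bool
  | str

/-- Subtyping of atomic types against tests. -/
def TestSub : Ty → Test → Prop
  | .bool, .bool => True
  | .str, .str => True
  | .elem n _, .lab m => n = m
  | .elem _ _, .wild => True
  | _, _ => False

/-- Multiplicities: singular (1) or plural (*). -/
inductive Mult : Type where
  | one
  | many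

/-- Flux update statements. -/
inductive Stmt : Type where
  | skip
  | seqS (s₁ s₂ : Stmt)
  | ifS (e : Expr) (s₁ s₂ : Stmt)
  | letS (x : ℕ) (e : Expr) (s : Stmt)
  | call (P : ℕ) (args : List Expr)
  | ins (e : Expr)
  | del
  | ren (n : ℕ)
  | snap (x : ℕ) (s : Stmt)
  | test (φ : Test) (s : Stmt)
  | left (s : Stmt)
  | right (s : Stmt)
  | children (s : Stmt)
  | iter (s : Stmt)

mutual
/-- Algorithmic update typing judgment Γ ⊩ₐ {τ} s {τ'} (no subsumption). -/
inductive AUpd (E : ℕ → Ty) (Δ : ℕ → Option (List Ty × Ty))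
    (Δp : ℕ → Option (List Ty × Ty × Ty)) : Mult → Env → Ty → Stmt → Ty → Prop where
  | skip {a Γ τ} : AUpd E Δ Δp a Γ τ .skip τ
  | seqS {a Γ τ τ' τ'' s s'} : AUpd E Δ Δp a Γ τ s τ' → AUpd E Δ Δp a Γ τ' s' τ'' →
      AUpd E Δ Δp a Γ τ (.seqS s s') τ''
  | letS {a Γ x e τe τ₁ τ₂ s} : ATy E Δ Γ e τe → AUpd E Δ Δp a (Γ.addF x τe) τ₁ s τ₂ →
      AUpd E Δ Δp a Γ τ₁ (.letS x e s) τ₂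
  | ifS {a Γ e s₁ s₂ τ τ₁ τ₂} : ATy E Δ Γ e .bool → AUpd E Δ Δp a Γ τ s₁ τ₁ →
      AUpd E Δ Δp a Γ τ s₂ τ₂ → AUpd E Δ Δp a Γ τ (.ifS e s₁ s₂) (.alt τ₁ τ₂)
  | snap {a Γ x τ τ' s} : AUpd E Δ Δp a (Γ.addF x τ) τ s τ' → AUpd E Δ Δp a Γ τ (.snap x s) τ'
  | ins {Γ e τ} : ATy E Δ Γ e τ → AUpd E Δ Δp .many Γ .eps (.ins e) τ
  | del {a Γ τ} : AUpd E Δ Δp a Γ τ .del .eps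
  | ren {Γ n n' t} : AUpd E Δ Δp .one Γ (.elem n' t) (.ren n) (.elem n t)
  | testPos {Γ α φ s τ} : Ty.Atomic α → TestSub α φ → AUpd E Δ Δp .one Γ α s τ →
      AUpd E Δ Δp .one Γ α (.test φ s) τ
  | testNeg {Γ α φ s} : Ty.Atomic α → ¬ TestSub α φ → AUpd E Δ Δp .one Γ α (.test φ s) α
  | children {Γ n t t' s} : AUpd E Δ Δp .many Γ t s t' →
      AUpd E Δ Δp .one Γ (.elem n t) (.children s) (.elem n t')
  | left {a Γ τ τ' s} : AUpd E Δ Δp .many Γ .eps s τ' → AUpd E Δ Δp a Γ τ (.left s) (.seq τ' τ)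
  | right {a Γ τ τ' s} : AUpd E Δ Δp .many Γ .eps s τ' → AUpd E Δ Δp a Γ τ (.right s) (.seq τ τ')
  | iter {Γ τ τ' s} : AIterU E Δ Δp Γ τ s τ' → AUpd E Δ Δp .many Γ τ (.iter s) τ'
  | call {a Γ P args σs σ σ' τ} : Δp P = some (σs, σ, σ') → Subty E τ σ →
      AArgs E Δ Γ args σs → AUpd E Δ Δp a Γ τ (.call P args) σ'

/-- Algorithmic iteration judgment Γ ⊩ᵢₜₑᵣ {τ} s {τ'}. -/
inductive AIterU (E : ℕ → Ty) (Δ : ℕ → Option (List Ty × Ty))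
    (Δp : ℕ → Option (List Ty × Ty × Ty)) : Env → Ty → Stmt → Ty → Prop where
  | eps {Γ s} : AIterU E Δ Δp Γ .eps s .eps
  | atom {Γ α s τ} : Ty.Atomic α → AUpd E Δ Δp .one Γ α s τ → AIterU E Δ Δp Γ α s τ
  | tvar {Γ X s τ} : AIterU E Δ Δp Γ (E X) s τ → AIterU E Δ Δp Γ (.tvar X) s τ
  | seq {Γ t₁ t₂ s τ₁ τ₂} : AIterU E Δ Δp Γ t₁ s τ₁ → AIterU E Δ Δp Γ t₂ s τ₂ →
      AIterU E Δ Δp Γ (.seq t₁ t₂) s (.seq τ₁ τ₂)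
  | alt {Γ t₁ t₂ s τ₁ τ₂} : AIterU E Δ Δp Γ t₁ s τ₁ → AIterU E Δ Δp Γ t₂ s τ₂ →
      AIterU E Δ Δp Γ (.alt t₁ t₂) s (.alt τ₁ τ₂)
  | star {Γ t s τ} : AIterU E Δ Δp Γ t s τ → AIterU E Δ Δp Γ (.star t) s (.star τ)
end

mutual
/-- Declarative update typing judgment Γ ⊢ₐ {τ} s {τ'} (with subsumption). -/
inductive DUpd (E : ℕ → Ty) (Δ : ℕ → Option (List Ty × Ty))
    (Δp : ℕ → Option (List Ty × Ty × Ty)) : Mult → Env → Ty → Stmt → Ty → Prop where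
  | skip {a Γ τ} : DUpd E Δ Δp a Γ τ .skip τ
  | seqS {a Γ τ τ' τ'' s s'} : DUpd E Δ Δp a Γ τ s τ' → DUpd E Δ Δp a Γ τ' s' τ'' →
      DUpd E Δ Δp a Γ τ (.seqS s s') τ''
  | letS {a Γ x e τe τ₁ τ₂ s} : DTy E Δ Γ e τe → DUpd E Δ Δp a (Γ.addF x τe) τ₁ s τ₂ →
      DUpd E Δ Δp a Γ τ₁ (.letS x e s) τ₂
  | ifS {a Γ e s₁ s₂ τ τ₁ τ₂} : DTy E Δ Γ e .bool → DUpd E Δ Δp a Γ τ s₁ τ₁ →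
      DUpd E Δ Δp a Γ τ s₂ τ₂ → DUpd E Δ Δp a Γ τ (.ifS e s₁ s₂) (.alt τ₁ τ₂)
  | snap {a Γ x τ τ' s} : DUpd E Δ Δp a (Γ.addF x τ) τ s τ' → DUpd E Δ Δp a Γ τ (.snap x s) τ'
  | ins {Γ e τ} : DTy E Δ Γ e τ → DUpd E Δ Δp .many Γ .eps (.ins e) τ
  | del {a Γ τ} : DUpd E Δ Δp a Γ τ .del .eps
  | ren {Γ n n' t} : DUpd E Δ Δp .one Γ (.elem n' t) (.ren n) (.elem n t)
  | testPos {Γ α φ s τ} : Ty.Atomic α → TestSub α φ → DUpd E Δ Δp .one Γ α s τ →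
      DUpd E Δ Δp .one Γ α (.test φ s) τ
  | testNeg {Γ α φ s} : Ty.Atomic α → ¬ TestSub α φ → DUpd E Δ Δp .one Γ α (.test φ s) α
  | children {Γ n t t' s} : DUpd E Δ Δp .many Γ t s t' →
      DUpd E Δ Δp .one Γ (.elem n t) (.children s) (.elem n t')
  | left {a Γ τ τ' s} : DUpd E Δ Δp .many Γ .eps s τ' → DUpd E Δ Δp a Γ τ (.left s) (.seq τ' τ)
  | right {a Γ τ τ' s} : DUpd E Δ Δp .many Γ .eps s τ' → DUpd E Δ Δp a Γ τ (.right s) (.seq τ τ')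
  | iter {Γ τ τ' s} : DIterU E Δ Δp Γ τ s τ' → DUpd E Δ Δp .many Γ τ (.iter s) τ'
  | call {a Γ P args τs σ σ₂ σ₁} : Δp P = some (τs, σ, σ₂) → Subty E σ₁ σ →
      DArgs E Δ Γ args τs → DUpd E Δ Δp a Γ σ₁ (.call P args) σ₂
  | sub {a Γ τ₁ s τ₂' τ₂} : DUpd E Δ Δp a Γ τ₁ s τ₂' → Subty E τ₂' τ₂ →
      DUpd E Δ Δp a Γ τ₁ s τ₂

/-- Declarative iteration judgment Γ ⊢ᵢₜₑᵣ {τ} s {τ'}. -/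
inductive DIterU (E : ℕ → Ty) (Δ : ℕ → Option (List Ty × Ty))
    (Δp : ℕ → Option (List Ty × Ty × Ty)) : Env → Ty → Stmt → Ty → Prop where
  | eps {Γ s} : DIterU E Δ Δp Γ .eps s .eps
  | atom {Γ α s τ} : Ty.Atomic α → DUpd E Δ Δp .one Γ α s τ → DIterU E Δ Δp Γ α s τ
  | tvar {Γ X s τ} : DIterU E Δ Δp Γ (E X) s τ → DIterU E Δ Δp Γ (.tvar X) s τ
  | seq {Γ t₁ t₂ s τ₁ τ₂} : DIterU E Δ Δp Γ t₁ s τ₁ → DIterU E Δ Δp Γ t₂ s τ₂ →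
      DIterU E Δ Δp Γ (.seq t₁ t₂) s (.seq τ₁ τ₂)
  | alt {Γ t₁ t₂ s τ₁ τ₂} : DIterU E Δ Δp Γ t₁ s τ₁ → DIterU E Δ Δp Γ t₂ s τ₂ →
      DIterU E Δ Δp Γ (.alt t₁ t₂) s (.alt τ₁ τ₂)
  | star {Γ t s τ} : DIterU E Δ Δp Γ t s τ → DIterU E Δ Δp Γ (.star t) s (.star τ)
end

/-! Each algorithmic rule is an instance of the declarative rule of the same name, except
that calls check argument subtyping explicitly; there the declarative derivation
applies query subsumption once per argument. -/

section Soundness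

variable {E : ℕ → Ty} {Δ : ℕ → Option (List Ty × Ty)} {Δp : ℕ → Option (List Ty × Ty × Ty)}

mutual
theorem ATy.toDTy {Γ : Env} {e : Expr} {τ : Ty} : ATy E Δ Γ e τ → DTy E Δ Γ e τ
  | .eps => .eps
  | .str => .str
  | .bool => .bool
  | .fvar hx => .fvar hx
  | .tvar hx hα => .tvar hx hα
  | .seq h₁ h₂ => .seq h₁.toDTy h₂.toDTy
  | .elem h => .elem h.toDTy
  | .letE h₁ h₂ => .letE h₁.toDTy h₂.toDTy
  | .ifE hc h₁ h₂ => .ifE hc.toDTy h₁.toDTy h₂.toDTy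
  | .child hx => .child hx
  | .label h hf => .label h.toDTy hf
  | .forE h₁ h₂ => .forE h₁.toDTy h₂.toDIter
  | .app hF hargs => .app hF hargs.toDArgs

theorem AArgs.toDArgs {Γ : Env} {es : List Expr} {σs : List Ty} :
    AArgs E Δ Γ es σs → DArgs E Δ Γ es σs
  | .nil => .nil
  | .cons he hsub hes => .cons (.sub he.toDTy hsub) hes.toDArgs

theorem AIter.toDIter {Γ : Env} {x : ℕ} {τ : Ty} {e : Expr} {τ' : Ty} :
    AIter E Δ Γ x τ e τ' → DIter E Δ Γ x τ e τ'
  | .eps => .eps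
  | .atom hα h => .atom hα h.toDTy
  | .tvar h => .tvar h.toDIter
  | .seq h₁ h₂ => .seq h₁.toDIter h₂.toDIter
  | .alt h₁ h₂ => .alt h₁.toDIter h₂.toDIter
  | .star h => .star h.toDIter
end

mutual
theorem AUpd.toDUpd {a : Mult} {Γ : Env} {τ : Ty} {s : Stmt} {τ' : Ty} :
    AUpd E Δ Δp a Γ τ s τ' → DUpd E Δ Δp a Γ τ s τ'
  | .skip => .skip
  | .seqS h₁ h₂ => .seqS h₁.toDUpd h₂.toDUpd
  | .letS he h => .letS he.toDTy h.toDUpd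
  | .ifS he h₁ h₂ => .ifS he.toDTy h₁.toDUpd h₂.toDUpd
  | .snap h => .snap h.toDUpd
  | .ins he => .ins he.toDTy
  | .del => .del
  | .ren => .ren
  | .testPos hα hφ h => .testPos hα hφ h.toDUpd
  | .testNeg hα hφ => .testNeg hα hφ
  | .children h => .children h.toDUpd
  | .left h => .left h.toDUpd
  | .right h => .right h.toDUpd
  | .iter h => .iter h.toDIterU
  | .call hP hsub hargs => .call hP hsub hargs.toDArgs

theorem AIterU.toDIterU {Γ : Env} {τ : Ty} {s : Stmt} {τ' : Ty} :
    AIterU E Δ Δp Γ τ s τ' → DIterU E Δ Δp Γ τ s τ'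
  | .eps => .eps
  | .atom hα h => .atom hα h.toDUpd
  | .tvar h => .tvar h.toDIterU
  | .seq h₁ h₂ => .seq h₁.toDIterU h₂.toDIterU
  | .alt h₁ h₂ => .alt h₁.toDIterU h₂.toDIterU
  | .star h => .star h.toDIterU
end

end Soundness

/-- algorithmic soundness for Flux updates. -/
theorem alg_update_soundness (E : ℕ → Ty) (hE : WellFormedSig E)
    (Δ : ℕ → Option (List Ty × Ty)) (Δp : ℕ → Option (List Ty × Ty × Ty)) :
    (∀ (a : Mult) (Γ : Env) (τ : Ty) (s : Stmt) (τ' : Ty),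
        AUpd E Δ Δp a Γ τ s τ' → DUpd E Δ Δp a Γ τ s τ') ∧
    (∀ (Γ : Env) (τ : Ty) (s : Stmt) (τ' : Ty),
        AIterU E Δ Δp Γ τ s τ' → DIterU E Δ Δp Γ τ s τ') :=
  ⟨fun _ _ _ _ _ h => h.toDUpd, fun _ _ _ _ h => h.toDIterU⟩

end RegXDU
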